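/- Let (J,γ) be a nilpotent metrised real Jordan algebra of dimension n ≥ 2 whose trace form γ has a signature with k negative eigenvalues. Suppose (J,γ) admits a semi-canonical form (with respect to some basis e₁,…,e_n) whose partition S has exactly m subsets of size 2, and suppose m < -3/2 + √(9/4 + 2·max(k, n-k)). Then (J,γ) is reducible, i.e., J is the direct sum of two nonzero mutually γ-orthogonal ideals. -/

import Mathlib

open Module

/-- The central ascending series of a commutative algebra with multiplication `mul`:
`C₀ = {0}`, `C_{k+1} = {x : x∙y ∈ C_k for all y}`. -/
def cas {A : Type*} [AddCommGroup A] [Module ℝ A]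
    (mul : A →ₗ[ℝ] A →ₗ[ℝ] A) : ℕ → Submodule ℝ A
  | 0 => ⊥
  | (k + 1) =>
    { carrier := {x | ∀ y, mul x y ∈ cas mul k}
      add_mem' := fun {a b} ha hb y => by
        simpa [map_add, LinearMap.add_apply] using (cas mul k).add_mem (ha y) (hb y)
      zero_mem' := fun y => by simp
      smul_mem' := fun c a ha y => by
        simpa [map_smul, LinearMap.smul_apply] using (cas mul k).smul_mem c (ha y) }

/-- `(J,γ)` is reducible: `J` is the direct sum of two nonzero ideals that are mutually
`γ`-orthogonal. -/
def Reducible {J : Type*} [AddCommGroup J] [Module ℝ J]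
    (mul : J →ₗ[ℝ] J →ₗ[ℝ] J) (γ : J →ₗ[ℝ] J →ₗ[ℝ] ℝ) : Prop :=
  ∃ I I' : Submodule ℝ J, I ≠ ⊥ ∧ I' ≠ ⊥ ∧ IsCompl I I' ∧
    (∀ x ∈ I, ∀ y, mul x y ∈ I) ∧ (∀ x ∈ I', ∀ y, mul x y ∈ I') ∧
    (∀ x ∈ I, ∀ y ∈ I', γ x y = 0)

/-!
Let `L = {j | j < σ j}`, so `|L| = m`, and let `P ε` be the set of fixed points `i` of `σ` with
`γ (e i) (e i) = ε`. By Sylvester's law of inertia `k = |P (-1)| + m` and `n - k = |P 1| + m`, so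
the dimension bound says `|P ε| > m (m + 1) / 2` for some sign `ε`.

For a fixed point `i`, the flag condition and the invariance of `γ` put `e i ∙ J` inside
`span {e j | j ∈ L}`, on which the functionals `γ (·, e (σ j))`, `j ∈ L`, are the coordinates.
Hence a combination `x` of the `e i`, `i ∈ P ε`, annihilates `J` as soon as it is `γ`-orthogonal
to the `m (m + 1) / 2` products `e (σ j) ∙ e (σ j')`, `j, j' ∈ L`. A nonzero such `x` exists by
counting dimensions, and `γ (x, x) ≠ 0` because `γ` is `ε`-definite on `span (e '' P ε)`. Then
`J = ℝ x ⊕ x^⊥` is a splitting into orthogonal ideals.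
-/

open Finset

section LinearAlgebra

variable {M ι : Type*} [AddCommGroup M] [Module ℝ M] [Fintype ι]

theorem apply_sum_smul_self_of_pairwise (ψ : M →ₗ[ℝ] M →ₗ[ℝ] ℝ) {v : ι → M}
    (hv : Pairwise fun i j => ψ (v i) (v j) = 0) (c : ι → ℝ) :
    ψ (∑ i, c i • v i) (∑ i, c i • v i) = ∑ i, c i ^ 2 * ψ (v i) (v i) := by
  classical
  simp only [map_sum, map_smul, LinearMap.sum_apply, LinearMap.smul_apply, smul_eq_mul]
  refine sum_congr rfl fun i _ => ?_
  rw [sum_eq_single i (fun j _ hji => by rw [hv hji, mul_zero]) (by simp)]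
  ring

theorem apply_sum_smul_self_neg_of_pairwise (ψ : M →ₗ[ℝ] M →ₗ[ℝ] ℝ) {v : ι → M}
    (hv : Pairwise fun i j => ψ (v i) (v j) = 0) (hneg : ∀ i, ψ (v i) (v i) < 0)
    {c : ι → ℝ} (hc : c ≠ 0) :
    ψ (∑ i, c i • v i) (∑ i, c i • v i) < 0 := by
  obtain ⟨i, hi⟩ := Function.ne_iff.mp hc
  rw [apply_sum_smul_self_of_pairwise ψ hv, ← neg_pos, ← sum_neg_distrib]
  refine sum_pos' (fun j _ => ?_) ⟨i, mem_univ i, ?_⟩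
  · exact neg_nonneg.mpr (mul_nonpos_of_nonneg_of_nonpos (sq_nonneg _) (hneg j).le)
  · exact neg_pos.mpr (mul_neg_of_pos_of_neg (pow_two_pos_of_ne_zero hi) (hneg i))

theorem apply_sum_smul_self_ne_zero_of_pairwise (ψ : M →ₗ[ℝ] M →ₗ[ℝ] ℝ) {v : ι → M}
    (hv : Pairwise fun i j => ψ (v i) (v j) = 0) {ε : ℝ} (hε : ε ≠ 0) (hvε : ∀ i, ψ (v i) (v i) = ε)
    {c : ι → ℝ} (hc : c ≠ 0) :
    ψ (∑ i, c i • v i) (∑ i, c i • v i) ≠ 0 := by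
  obtain ⟨i, hi⟩ := Function.ne_iff.mp hc
  rw [apply_sum_smul_self_of_pairwise ψ hv]
  simp only [hvε, ← sum_mul]
  have hsum : 0 < ∑ j, c j ^ 2 :=
    sum_pos' (fun j _ => sq_nonneg (c j)) ⟨i, mem_univ i, pow_two_pos_of_ne_zero hi⟩
  exact mul_ne_zero hsum.ne' hε

theorem exists_ne_zero_forall_apply_sum_smul_eq_zero {S : Type*} [Fintype S]
    (f : S → M →ₗ[ℝ] ℝ) (v : ι → M) (h : Fintype.card S < Fintype.card ι) :
    ∃ c : ι → ℝ, c ≠ 0 ∧ ∀ s, f s (∑ i, c i • v i) = 0 := by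
  have hker := LinearMap.ker_ne_bot_of_finrank_lt (K := ℝ)
    (f := LinearMap.pi f ∘ₗ Fintype.linearCombination ℝ v) (by simpa using h)
  obtain ⟨c, hc, hc0⟩ := (Submodule.ne_bot_iff _).mp hker
  exact ⟨c, hc0, fun s => by simpa [Fintype.linearCombination_apply] using congrFun hc s⟩

/-- One half of Sylvester's law of inertia. -/
theorem card_le_card_filter_neg_of_pairwise [FiniteDimensional ℝ M] {κ : Type*} [Fintype κ]
    (ψ : M →ₗ[ℝ] M →ₗ[ℝ] ℝ) (b : Basis κ ℝ M) (hb : Pairwise fun i j => ψ (b i) (b j) = 0)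
    {v : ι → M} (hv : Pairwise fun i j => ψ (v i) (v j) = 0) (hneg : ∀ i, ψ (v i) (v i) < 0) :
    Fintype.card ι ≤ #{j | ψ (b j) (b j) < 0} := by
  classical
  set N : Finset κ := {j | ψ (b j) (b j) < 0}
  let Φ : (ι → ℝ) →ₗ[ℝ] (N → ℝ) :=
    LinearMap.pi (fun j : N => b.coord j) ∘ₗ Fintype.linearCombination ℝ v
  have hΦ : Function.Injective Φ := by
    rw [← LinearMap.ker_eq_bot, LinearMap.ker_eq_bot']
    intro c hc
    by_contra hc0
    have hx : ∀ j ∈ N, b.repr (∑ i, c i • v i) j = 0 := fun j hj => by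
      simpa [Φ, Fintype.linearCombination_apply] using congrFun hc ⟨j, hj⟩
    have hnonneg : 0 ≤ ψ (∑ i, c i • v i) (∑ i, c i • v i) := by
      rw [← b.sum_repr (∑ i, c i • v i), apply_sum_smul_self_of_pairwise ψ hb]
      refine sum_nonneg fun j _ => ?_
      by_cases hj : j ∈ N
      · rw [hx j hj]; simp
      · exact mul_nonneg (sq_nonneg _) (not_lt.mp (by simpa [N] using hj))
    exact hnonneg.not_gt (apply_sum_smul_self_neg_of_pairwise ψ hv hneg hc0)
  simpa using LinearMap.finrank_le_finrank_of_injective hΦ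

end LinearAlgebra

theorem reducible_of_mul_eq_zero {M : Type*} [AddCommGroup M] [Module ℝ M] [FiniteDimensional ℝ M]
    (hdim : 2 ≤ finrank ℝ M) (mul : M →ₗ[ℝ] M →ₗ[ℝ] M) (γ : M →ₗ[ℝ] M →ₗ[ℝ] ℝ)
    (hcomm : ∀ u v, mul u v = mul v u) (htrace : ∀ u v w, γ (mul u v) w = γ u (mul v w))
    {x : M} (hxx : γ x x ≠ 0) (hx : ∀ y, mul x y = 0) :
    Reducible mul γ := by
  have hx0 : x ≠ 0 := by rintro rfl; simp at hxx
  have hγx : γ x ≠ 0 := fun h => hxx (by rw [h, LinearMap.zero_apply])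
  refine ⟨ℝ ∙ x, LinearMap.ker (γ x), by simpa using hx0,
    LinearMap.ker_ne_bot_of_finrank_lt (by rwa [finrank_self]),
    (Module.Dual.isCompl_ker_of_disjoint_of_ne_bot hγx
      (Submodule.disjoint_span_singleton_of_notMem hxx) (by simpa using hx0)).symm, ?_, ?_, ?_⟩
  · intro z hz y
    obtain ⟨a, rfl⟩ := Submodule.mem_span_singleton.mp hz
    simp [hx y]
  · intro z hz y
    rw [LinearMap.mem_ker] at hz ⊢
    rw [hcomm, ← htrace, hx, map_zero, LinearMap.zero_apply]
  · intro z hz y hy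
    obtain ⟨a, rfl⟩ := Submodule.mem_span_singleton.mp hz
    simp [LinearMap.mem_ker.mp hy]

theorem Function.Involutive.two_mul_card_filter_lt {ι : Type*} [LinearOrder ι] [Fintype ι]
    {σ : ι → ι} (hσ : Function.Involutive σ) : 2 * #{i | i < σ i} = #{i | σ i ≠ i} := by
  have hswap : #{i | σ i < i} = #{i | i < σ i} :=
    card_nbij' σ σ (fun i hi => by simpa [hσ i] using hi) (fun i hi => by simpa [hσ i] using hi)
      (fun i _ => hσ i) (fun i _ => hσ i)
  have hsplit : ({i | σ i ≠ i} : Finset ι) =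
      ({i | i < σ i} : Finset ι) ∪ ({i | σ i < i} : Finset ι) := by
    rw [← filter_or]
    exact filter_congr fun i _ => ne_iff_lt_or_gt.trans or_comm
  rw [hsplit, card_union_of_disjoint (disjoint_filter.mpr fun i _ h₁ h₂ => h₁.asymm h₂), hswap]
  ring

theorem mul_add_three_mul_lt_of_lt_sqrt {m M : ℕ}
    (h : (m : ℝ) < -(3 / 2) + √(9 / 4 + 2 * (M : ℝ))) : m * m + 3 * m < 2 * M := by
  have h' : (m : ℝ) + 3 / 2 < √(9 / 4 + 2 * (M : ℝ)) := by linarith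
  rw [Real.lt_sqrt (by positivity)] at h'
  have : ((m * m + 3 * m : ℕ) : ℝ) < (2 * M : ℕ) := by push_cast; nlinarith
  exact_mod_cast this

theorem mul_basis_mem_span_Iio_of_flag {M : Type*} [AddCommGroup M] [Module ℝ M] {n : ℕ}
    {e : Basis (Fin n) ℝ M} {mul : M →ₗ[ℝ] M →ₗ[ℝ] M}
    (hflag : ∀ l, 1 ≤ l → l ≤ n →
      ∀ x ∈ Submodule.span ℝ (⇑e '' {i : Fin n | (i : ℕ) < l}),
        ∀ y, mul x y ∈ Submodule.span ℝ (⇑e '' {i : Fin n | (i : ℕ) < l - 1}))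
    (r : Fin n) (u : M) : mul (e r) u ∈ Submodule.span ℝ (e '' Set.Iio r) := by
  have := hflag (r + 1) (by omega) r.isLt (e r) (Submodule.subset_span ⟨r, by simp, rfl⟩) u
  have hIio : {i : Fin n | (i : ℕ) < r + 1 - 1} = Set.Iio r := by
    ext j; simp
  rwa [hIio] at this

section SemiCanonical

variable {M ι : Type*} [AddCommGroup M] [Module ℝ M]

/-- Condition (ii) of a semi-canonical form, the partition `S` being the orbits of `σ`. -/
structure IsSemiCanonicalGram (γ : M →ₗ[ℝ] M →ₗ[ℝ] ℝ) (e : Basis ι ℝ M) (σ : ι → ι) : Prop where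
  involutive : Function.Involutive σ
  apply_eq_zero : ∀ i j, j ≠ i → j ≠ σ i → γ (e i) (e j) = 0
  apply_self_of_fixed : ∀ i, σ i = i → γ (e i) (e i) = 1 ∨ γ (e i) (e i) = -1
  apply_of_not_fixed : ∀ i, σ i ≠ i → γ (e i) (e i) = 0 ∧ γ (e i) (e (σ i)) = 1

-- For `σ i ≠ i` this has norm `2 t`: with `t = ± 1 / 2` every pair `{i, σ i}` contributes a
-- vector of either sign, which is how the pairs enter the signature.
open Classical in
noncomputable def pairedVec (e : Basis ι ℝ M) (σ : ι → ι) (t : ℝ) (i : ι) : M :=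
  if σ i = i then e i else e i + t • e (σ i)

namespace IsSemiCanonicalGram

open Submodule

variable {γ : M →ₗ[ℝ] M →ₗ[ℝ] ℝ} {e : Basis ι ℝ M} {σ : ι → ι} {mul : M →ₗ[ℝ] M →ₗ[ℝ] M}

theorem apply_partner_ne_zero (h : IsSemiCanonicalGram γ e σ) (j : ι) :
    γ (e j) (e (σ j)) ≠ 0 := by
  by_cases hj : σ j = j
  · rw [hj]
    rcases h.apply_self_of_fixed j hj with h1 | h1 <;> rw [h1] <;> norm_num
  · rw [(h.apply_of_not_fixed j hj).2]
    exact one_ne_zero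

theorem apply_partner_eq_zero (h : IsSemiCanonicalGram γ e σ) {j j' : ι} (hj : j' ≠ j) :
    γ (e j') (e (σ j)) = 0 := by
  by_cases hj' : σ j = j'
  · subst hj'
    have hfix : σ (σ j) ≠ σ j := by rw [h.involutive j]; exact fun h' => hj h'.symm
    exact (h.apply_of_not_fixed (σ j) hfix).1
  · exact h.apply_eq_zero j' (σ j) hj' fun h' => hj (h.involutive.injective h').symm

theorem apply_partner [Fintype ι] (h : IsSemiCanonicalGram γ e σ) (w : M) (j : ι) :
    γ w (e (σ j)) = e.repr w j * γ (e j) (e (σ j)) := by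
  conv_lhs => rw [← e.sum_repr w]
  simp only [map_sum, map_smul, LinearMap.sum_apply, LinearMap.smul_apply, smul_eq_mul]
  exact sum_eq_single j (fun j' _ hj' => by rw [h.apply_partner_eq_zero hj', mul_zero])
    (by simp)

theorem apply_pairedVec_eq_zero (h : IsSemiCanonicalGram γ e σ) (t : ℝ) {i i' : ι}
    (h₁ : i' ≠ i) (h₂ : i' ≠ σ i) : γ (pairedVec e σ t i) (pairedVec e σ t i') = 0 := by
  have h₃ : σ i' ≠ i := fun h' => h₂ (by rw [← h', h.involutive])
  have h₄ : σ i' ≠ σ i := fun h' => h₁ (h.involutive.injective h')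
  have z₁ := h.apply_eq_zero i i' h₁ h₂
  have z₂ := h.apply_eq_zero i (σ i') h₃ h₄
  have z₃ := h.apply_eq_zero (σ i) i' h₂ (by rwa [h.involutive])
  have z₄ := h.apply_eq_zero (σ i) (σ i') h₄ (by rwa [h.involutive])
  unfold pairedVec
  split_ifs <;> simp [z₁, z₂, z₃, z₄]

theorem apply_pairedVec_self_of_not_fixed (h : IsSemiCanonicalGram γ e σ) (t : ℝ) {i : ι}
    (hi : σ i ≠ i) : γ (pairedVec e σ t i) (pairedVec e σ t i) = 2 * t := by
  have hσi : σ (σ i) ≠ σ i := by rw [h.involutive]; exact hi.symm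
  have h₁ := h.apply_of_not_fixed i hi
  have h₂ := h.apply_of_not_fixed (σ i) hσi
  rw [h.involutive] at h₂
  simp only [pairedVec, if_neg hi, map_add, map_smul, LinearMap.add_apply, LinearMap.smul_apply,
    smul_eq_mul, h₁.1, h₁.2, h₂.1, h₂.2]
  ring

variable [LinearOrder ι]

theorem pairwise_apply_pairedVec (h : IsSemiCanonicalGram γ e σ) (t : ℝ) {s : Finset ι}
    (hs : ∀ i ∈ s, i ≤ σ i) :
    Pairwise fun i j : s => γ (pairedVec e σ t i) (pairedVec e σ t j) = 0 := by
  rintro ⟨i, hi⟩ ⟨j, hj⟩ hij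
  simp only [ne_eq, Subtype.mk.injEq] at hij
  refine h.apply_pairedVec_eq_zero t (Ne.symm hij) fun (hji : j = σ i) => hij (le_antisymm ?_ ?_)
  · exact hji ▸ hs i hi
  · simpa only [hji, h.involutive i] using hs j hj

theorem apply_mul_fixed_eq_zero (h : IsSemiCanonicalGram γ e σ)
    (hcomm : ∀ u v, mul u v = mul v u) (htrace : ∀ u v w, γ (mul u v) w = γ u (mul v w))
    (hflag : ∀ r u, mul (e r) u ∈ span ℝ (e '' Set.Iio r)) {i : ι} (hi : σ i = i) (u : M)
    {r : ι} (hr : r ≤ i) : γ (mul (e i) u) (e r) = 0 := by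
  have hker : span ℝ (e '' Set.Iio r) ≤ LinearMap.ker (γ (e i)) := by
    refine span_le.mpr ?_
    rintro _ ⟨j, hj, rfl⟩
    have hji : j ≠ i := (lt_of_lt_of_le hj hr).ne
    exact h.apply_eq_zero i j hji (by rwa [hi])
  rw [htrace, hcomm]
  exact hker (hflag r u)

variable [Fintype ι]

theorem card_fixed_add_card_lt_le [FiniteDimensional ℝ M] (h : IsSemiCanonicalGram γ e σ)
    {κ : Type*} [Fintype κ] (b : Basis κ ℝ M) (hb : Pairwise fun i j => γ (b i) (b j) = 0)
    {ε : ℝ} (hε : ε = 1 ∨ ε = -1) :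
    #{i | σ i = i ∧ γ (e i) (e i) = ε} + #{i | i < σ i} ≤ #{j | 0 < ε * γ (b j) (b j)} := by
  classical
  set F : Finset ι := {i | σ i = i ∧ γ (e i) (e i) = ε}
  set L : Finset ι := {i | i < σ i}
  set s := F ∪ L
  have hε2 : ε * ε = 1 := by rcases hε with rfl | rfl <;> norm_num
  have hs : ∀ i ∈ s, i ≤ σ i := fun i hi => by
    rcases mem_union.mp hi with hi | hi
    · exact (mem_filter.mp hi).2.1.ge
    · exact (mem_filter.mp hi).2.le
  have hneg : ∀ i : s, (-ε • γ) (pairedVec e σ (ε / 2) i) (pairedVec e σ (ε / 2) i) < 0 := by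
    rintro ⟨i, hi⟩
    rw [LinearMap.smul_apply, LinearMap.smul_apply, smul_eq_mul]
    rcases mem_union.mp hi with hi | hi
    · obtain ⟨hfix, hγ⟩ := (mem_filter.mp hi).2
      simp only [pairedVec, if_pos hfix, hγ]
      linarith
    · rw [h.apply_pairedVec_self_of_not_fixed _ (mem_filter.mp hi).2.ne']
      linarith
  have hpair : Pairwise fun i j : s =>
      (-ε • γ) (pairedVec e σ (ε / 2) i) (pairedVec e σ (ε / 2) j) = 0 := fun i j hij => by
    simp [h.pairwise_apply_pairedVec _ hs hij]
  have key := card_le_card_filter_neg_of_pairwise _ b (fun i j hij => by simp [hb hij]) hpair hneg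
  rw [Fintype.card_coe, card_union_of_disjoint
    (disjoint_filter.mpr fun i _ hi (hlt : i < σ i) => hlt.ne' hi.1)] at key
  refine key.trans_eq (congrArg card (filter_congr fun j _ => ?_))
  simp only [LinearMap.smul_apply, smul_eq_mul, neg_mul]
  exact neg_neg_iff_pos

theorem card_fixed_one_add_card_fixed_neg_one_add_card_not_fixed
    (h : IsSemiCanonicalGram γ e σ) :
    #{i | σ i = i ∧ γ (e i) (e i) = 1} + #{i | σ i = i ∧ γ (e i) (e i) = -1}
      + #{i | σ i ≠ i} = Fintype.card ι := by
  classical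
  have hfix : ({i | σ i = i} : Finset ι) =
      ({i | σ i = i ∧ γ (e i) (e i) = 1} : Finset ι) ∪
        ({i | σ i = i ∧ γ (e i) (e i) = -1} : Finset ι) := by
    rw [← filter_or]
    refine filter_congr fun i _ => ⟨fun hi => ?_, ?_⟩
    · exact (h.apply_self_of_fixed i hi).imp (⟨hi, ·⟩) (⟨hi, ·⟩)
    · rintro (⟨hi, _⟩ | ⟨hi, _⟩) <;> exact hi
  rw [← card_union_of_disjoint (disjoint_filter.mpr fun i _ h₁ h₂ => by linarith [h₁.2, h₂.2]),
    ← hfix]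
  exact (card_filter_add_card_filter_not fun i => σ i = i).trans card_univ

theorem exists_sign_lt_card_fixed [FiniteDimensional ℝ M] (h : IsSemiCanonicalGram γ e σ)
    {κ : Type*} [Fintype κ] (b : Basis κ ℝ M) (hb : Pairwise fun i j => γ (b i) (b j) = 0)
    {k m : ℕ} (hk : #{j | γ (b j) (b j) < 0} = k) (hm : #{i | σ i ≠ i} = 2 * m)
    (hkm : m * m + 3 * m < 2 * max k (Fintype.card ι - k)) :
    ∃ ε : ℝ, ε ≠ 0 ∧
      #({i | i < σ i} : Finset ι).sym2 < #{i | σ i = i ∧ γ (e i) (e i) = ε} := by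
  classical
  have hL : #{i | i < σ i} = m := by have := h.involutive.two_mul_card_filter_lt; omega
  have hsym2 : #({i | i < σ i} : Finset ι).sym2 * 2 = m * m + m := by
    rw [card_sym2, hL, Nat.choose_two_right, Nat.add_sub_cancel,
      Nat.div_mul_cancel (mul_comm m (m + 1) ▸ Nat.even_mul_succ_self m).two_dvd]
    ring
  have hpos := h.card_fixed_add_card_lt_le b hb (Or.inl rfl)
  have hneg := h.card_fixed_add_card_lt_le b hb (Or.inr rfl)
  have hk' : #{j | 0 < -1 * γ (b j) (b j)} = k := by
    rw [← hk]; exact congrArg card (filter_congr fun j _ => by rw [neg_one_mul, neg_pos])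
  have hposk : #{j | 0 < 1 * γ (b j) (b j)} + k ≤ Fintype.card ι := by
    rw [← hk, ← card_union_of_disjoint (disjoint_filter.mpr fun j _ h₁ h₂ => by linarith),
      Fintype.card_congr (b.indexEquiv e).symm]
    exact card_le_univ _
  have hfixed := h.card_fixed_one_add_card_fixed_neg_one_add_card_not_fixed
  -- by `hfixed` and `hposk`, the inertia bounds `hpos`, `hneg` are equalities
  rcases le_total k (Fintype.card ι - k) with hle | hle
  · exact ⟨1, one_ne_zero, by rw [max_eq_right hle] at hkm; omega⟩
  · exact ⟨-1, by norm_num, by rw [max_eq_left hle] at hkm; omega⟩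

theorem mul_fixed_mem_span (h : IsSemiCanonicalGram γ e σ)
    (hcomm : ∀ u v, mul u v = mul v u) (htrace : ∀ u v w, γ (mul u v) w = γ u (mul v w))
    (hflag : ∀ r u, mul (e r) u ∈ span ℝ (e '' Set.Iio r)) {i : ι} (hi : σ i = i) (u : M) :
    mul (e i) u ∈ span ℝ (e '' {j | j < σ j}) := by
  refine e.mem_span_image.mpr fun j hj => ?_
  have hji : j < i := e.mem_span_image.mp (hflag i u) hj
  by_contra hσj
  have h0 := h.apply_partner (mul (e i) u) j
  rw [h.apply_mul_fixed_eq_zero hcomm htrace hflag hi u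
    ((not_lt.mp hσj).trans hji.le)] at h0
  exact Finsupp.mem_support_iff.mp hj
    ((mul_eq_zero.mp h0.symm).resolve_right (h.apply_partner_ne_zero j))

theorem eq_zero_of_mem_span (h : IsSemiCanonicalGram γ e σ) {w : M}
    (hw : w ∈ span ℝ (e '' {j | j < σ j})) (h0 : ∀ j, j < σ j → γ w (e (σ j)) = 0) : w = 0 := by
  refine e.ext_elem fun j => ?_
  rw [map_zero, Finsupp.coe_zero, Pi.zero_apply]
  by_cases hj : j < σ j
  · have := h.apply_partner w j
    rw [h0 j hj] at this
    exact (mul_eq_zero.mp this.symm).resolve_right (h.apply_partner_ne_zero j)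
  · exact Finsupp.notMem_support_iff.mp fun hs => hj (e.mem_span_image.mp hw hs)

theorem mul_eq_zero_of_apply_mul_partner (h : IsSemiCanonicalGram γ e σ)
    (hcomm : ∀ u v, mul u v = mul v u) (htrace : ∀ u v w, γ (mul u v) w = γ u (mul v w))
    (hflag : ∀ r u, mul (e r) u ∈ span ℝ (e '' Set.Iio r)) {x : M}
    (hx : x ∈ span ℝ (e '' {i | σ i = i}))
    (h0 : ∀ j j', j < σ j → j' < σ j' → γ x (mul (e (σ j)) (e (σ j'))) = 0) (u : M) :
    mul x u = 0 := by
  have hmem : ∀ u, mul x u ∈ span ℝ (e '' {j | j < σ j}) := fun u => by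
    have hle : span ℝ (e '' {i | σ i = i}) ≤ (span ℝ (e '' {j | j < σ j})).comap (mul.flip u) :=
      span_le.mpr <| by
        rintro _ ⟨i, hi, rfl⟩
        exact h.mul_fixed_mem_span hcomm htrace hflag hi u
    exact hle hx
  have hpartner : ∀ j, j < σ j → mul x (e (σ j)) = 0 := fun j hj =>
    h.eq_zero_of_mem_span (hmem _) fun j' hj' => by rw [htrace]; exact h0 j j' hj hj'
  refine h.eq_zero_of_mem_span (hmem u) fun j hj => ?_
  rw [htrace, hcomm u, ← htrace, hpartner j hj, map_zero, LinearMap.zero_apply]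

theorem reducible_of_card_sym2_lt [FiniteDimensional ℝ M] (h : IsSemiCanonicalGram γ e σ)
    (hdim : 2 ≤ finrank ℝ M) (hcomm : ∀ u v, mul u v = mul v u)
    (htrace : ∀ u v w, γ (mul u v) w = γ u (mul v w))
    (hflag : ∀ r u, mul (e r) u ∈ span ℝ (e '' Set.Iio r)) {ε : ℝ} (hε : ε ≠ 0)
    (hcard : #({j | j < σ j} : Finset ι).sym2 < #{i | σ i = i ∧ γ (e i) (e i) = ε}) :
    Reducible mul γ := by
  classical
  set P : Finset ι := {i | σ i = i ∧ γ (e i) (e i) = ε}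
  set L : Finset ι := {j | j < σ j}
  let g : Sym2 ι → M := Sym2.lift ⟨fun j j' => mul (e (σ j)) (e (σ j')), fun _ _ => hcomm _ _⟩
  obtain ⟨c, hc, hker⟩ := exists_ne_zero_forall_apply_sum_smul_eq_zero
    (fun s : L.sym2 => γ.flip (g s)) (fun i : P => e i)
    (by rwa [Fintype.card_coe, Fintype.card_coe])
  have hx : ∑ i : P, c i • e i ∈ span ℝ (e '' {i | σ i = i}) :=
    sum_mem fun i _ => smul_mem _ _ (subset_span ⟨i, (mem_filter.mp i.2).2.1, rfl⟩)
  have hann := h.mul_eq_zero_of_apply_mul_partner hcomm htrace hflag hx fun j j' hj hj' =>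
    hker ⟨s(j, j'), mk_mem_sym2_iff.mpr ⟨by simpa [L], by simpa [L]⟩⟩
  have hP : Pairwise fun i j : P => γ (e i) (e j) = 0 := fun i j hij =>
    h.apply_eq_zero i j (fun h' => hij (Subtype.ext h').symm)
      (by rw [(mem_filter.mp i.2).2.1]; exact fun h' => hij (Subtype.ext h').symm)
  exact reducible_of_mul_eq_zero hdim mul γ hcomm htrace
    (apply_sum_smul_self_ne_zero_of_pairwise γ hP hε (fun i => (mem_filter.mp i.2).2.2) hc) hann

end IsSemiCanonicalGram

end SemiCanonical

theorem stmt_12_general {J : Type*} [AddCommGroup J] [Module ℝ J] [FiniteDimensional ℝ J]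
    (n : ℕ) (hn : 2 ≤ n) (hdim : finrank ℝ J = n)
    (mul : J →ₗ[ℝ] J →ₗ[ℝ] J)
    (hcomm : ∀ u v, mul u v = mul v u)
    (γ : J →ₗ[ℝ] J →ₗ[ℝ] ℝ)
    (htrace : ∀ u v w, γ (mul u v) w = γ u (mul v w))
    -- the signature of γ has k negative eigenvalues
    (k : ℕ)
    (hsig : ∃ b : Basis (Fin n) ℝ J, (∀ i j : Fin n, i ≠ j → γ (b i) (b j) = 0) ∧
      (Finset.univ.filter fun i : Fin n => γ (b i) (b i) < 0).card = k)
    -- a semi-canonical form of (J,γ)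
    (e : Basis (Fin n) ℝ J)
    (hflag : ∀ l, 1 ≤ l → l ≤ n →
      ∀ x ∈ Submodule.span ℝ (⇑e '' {i : Fin n | (i : ℕ) < l}),
        ∀ y, mul x y ∈ Submodule.span ℝ (⇑e '' {i : Fin n | (i : ℕ) < l - 1}))
    (σ : Fin n → Fin n) (hσ : ∀ i, σ (σ i) = i)
    (hoff : ∀ i j : Fin n, j ≠ i → j ≠ σ i → γ (e i) (e j) = 0)
    (hsingle : ∀ i, σ i = i → γ (e i) (e i) = 1 ∨ γ (e i) (e i) = -1)
    (hpair : ∀ i, σ i ≠ i → γ (e i) (e i) = 0 ∧ γ (e i) (e (σ i)) = 1)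
    -- the partition has exactly m subsets of size 2
    (m : ℕ) (hm : (Finset.univ.filter fun i : Fin n => σ i ≠ i).card = 2 * m)
    -- the dimension bound
    (hlt : (m : ℝ) < -(3/2) + Real.sqrt (9/4 + 2 * (max k (n - k) : ℕ))) :
    Reducible mul γ := by
  obtain ⟨b, hb, hk⟩ := hsig
  have he : IsSemiCanonicalGram γ e σ := ⟨hσ, hoff, hsingle, hpair⟩
  have hkm := mul_add_three_mul_lt_of_lt_sqrt hlt
  rw [← Fintype.card_fin n] at hkm
  obtain ⟨ε, hε, hcard⟩ := he.exists_sign_lt_card_fixed b (fun i j => hb i j) hk hm hkm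
  exact he.reducible_of_card_sym2_lt (hdim ▸ hn) hcomm htrace
    (mul_basis_mem_span_Iio_of_flag hflag) hε hcard

/-- let `(J,γ)` be a nilpotent metrised real Jordan algebra of dimension
`n ≥ 2` whose trace form has `k` negative eigenvalues. If `(J,γ)` admits a semi-canonical
form (flag property `hflag`, partition encoded by the involution `σ`) whose partition has
exactly `m` subsets of size 2 and `m < -3/2 + √(9/4 + 2 max(k, n-k))`, then `(J,γ)` is
reducible. -/
theorem stmt_12 {J : Type*} [AddCommGroup J] [Module ℝ J] [FiniteDimensional ℝ J]
    (n : ℕ) (hn : 2 ≤ n) (hdim : finrank ℝ J = n)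
    (mul : J →ₗ[ℝ] J →ₗ[ℝ] J)
    (hcomm : ∀ u v, mul u v = mul v u)
    (hjordan : ∀ u v, mul u (mul (mul u u) v) = mul (mul u u) (mul u v))
    (γ : J →ₗ[ℝ] J →ₗ[ℝ] ℝ)
    (hsymm : ∀ u v, γ u v = γ v u)
    (hnd : ∀ u, (∀ v, γ u v = 0) → u = 0)
    (htrace : ∀ u v w, γ (mul u v) w = γ u (mul v w))
    (hnilp : ∃ m, cas mul m = ⊤)
    -- the signature of γ has k negative eigenvalues
    (k : ℕ)
    (hsig : ∃ b : Basis (Fin n) ℝ J, (∀ i j : Fin n, i ≠ j → γ (b i) (b j) = 0) ∧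
      (Finset.univ.filter fun i : Fin n => γ (b i) (b i) < 0).card = k)
    -- a semi-canonical form of (J,γ)
    (e : Basis (Fin n) ℝ J)
    (hflag : ∀ l, 1 ≤ l → l ≤ n →
      ∀ x ∈ Submodule.span ℝ (⇑e '' {i : Fin n | (i : ℕ) < l}),
        ∀ y, mul x y ∈ Submodule.span ℝ (⇑e '' {i : Fin n | (i : ℕ) < l - 1}))
    (σ : Fin n → Fin n) (hσ : ∀ i, σ (σ i) = i)
    (hoff : ∀ i j : Fin n, j ≠ i → j ≠ σ i → γ (e i) (e j) = 0)
    (hsingle : ∀ i, σ i = i → γ (e i) (e i) = 1 ∨ γ (e i) (e i) = -1)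
    (hpair : ∀ i, σ i ≠ i → γ (e i) (e i) = 0 ∧ γ (e i) (e (σ i)) = 1)
    -- the partition has exactly m subsets of size 2
    (m : ℕ) (hm : (Finset.univ.filter fun i : Fin n => σ i ≠ i).card = 2 * m)
    -- the dimension bound
    (hlt : (m : ℝ) < -(3/2) + Real.sqrt (9/4 + 2 * (max k (n - k) : ℕ))) :
    Reducible mul γ :=
  stmt_12_general n hn hdim mul hcomm γ htrace k hsig e hflag σ hσ hoff hsingle hpair m hm hlt
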